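/- arXiv:1910.05793 — 3 statements merged into one kernel-verified Lean document; each statement's English description precedes it below -/
import Mathlib

section
/- Let γ ∈ (0,1), 1 ≤ q < ∞, and let G : ℝⁿ → ℝ be C¹ with γ-Hölder gradient (constant C₀). Let η^ε be a standard mollifier on ℝ^m. Then for any u ∈ L^∞ ∩ L^{q(1+γ)}(ℝ^m; ℝⁿ), pointwise a.e. one has |G(u) * η^ε (x) - G(u * η^ε)(x)| ≤ 2 C₀ ∫ |u(x) - u(x - y)|^{1+γ} η^ε(y) dy. -/
open MeasureTheory
open scoped ENNReal

private lemma taylor_est {n : ℕ} {γ C₀ : ℝ} (hγ : 0 < γ) (hC₀ : 0 ≤ C₀)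
    {G : (Fin n → ℝ) → ℝ} (hG : ContDiff ℝ 1 G)
    (hHolder : ∀ y z, ‖fderiv ℝ G y - fderiv ℝ G z‖ ≤ C₀ * ‖y - z‖ ^ γ)
    (a b : Fin n → ℝ) :
    |G a - G b - fderiv ℝ G b (a - b)| ≤ C₀ * ‖a - b‖ ^ (1 + γ) := by
  have hdiff := hG.differentiable one_ne_zero
  have key := (convex_closedBall b ‖a - b‖).norm_image_sub_le_of_norm_hasFDerivWithin_le'
    (f := G) (f' := fun z => fderiv ℝ G z) (φ := fderiv ℝ G b) (C := C₀ * ‖a - b‖ ^ γ)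
    (x := b) (y := a)
    (fun z _ => (hdiff z).hasFDerivAt.hasFDerivWithinAt)
    (fun z hz => by
      refine (hHolder z b).trans ?_
      have hzb : ‖z - b‖ ≤ ‖a - b‖ := by
        simpa [Metric.mem_closedBall, dist_eq_norm] using hz
      exact mul_le_mul_of_nonneg_left (Real.rpow_le_rpow (norm_nonneg _) hzb hγ.le) hC₀)
    (Metric.mem_closedBall_self (norm_nonneg _))
    (by simp [Metric.mem_closedBall, dist_eq_norm])
  rw [← Real.norm_eq_abs]
  refine key.trans (le_of_eq ?_)
  rw [Real.rpow_add' (norm_nonneg _) (by positivity), Real.rpow_one]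
  ring

/-- Pointwise commutator estimate: for `G ∈ C^{1,γ}`,
`|G(u) * η^ε (x) - G(u * η^ε)(x)| ≤ 2 C₀ ∫ |u(x) - u(x-y)|^{1+γ} η^ε(y) dy` a.e. -/
theorem stmt_6 {m n : ℕ} (γ C₀ : ℝ) (hγ : 0 < γ) (hγ1 : γ < 1) (hC₀ : 0 ≤ C₀)
    (q : ℝ) (hq : 1 ≤ q)
    (G : (Fin n → ℝ) → ℝ) (hG : ContDiff ℝ 1 G)
    (hHolder : ∀ y z, ‖fderiv ℝ G y - fderiv ℝ G z‖ ≤ C₀ * ‖y - z‖ ^ γ)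
    (u : (Fin m → ℝ) → (Fin n → ℝ))
    (hub : MemLp u ⊤ volume) (hu : MemLp u (ENNReal.ofReal (q * (1 + γ))) volume)
    (η : (Fin m → ℝ) → ℝ) (hη : ContDiff ℝ (⊤ : ℕ∞) η) (hηc : HasCompactSupport η)
    (hηnn : ∀ x, 0 ≤ η x) (hηint : ∫ x, η x = 1)
    (hηsupp : Function.support η ⊆ Metric.closedBall 0 1)
    (ε : ℝ) (hε : 0 < ε) :
    ∀ᵐ x ∂(volume : Measure (Fin m → ℝ)),
      |(∫ y, (((ε : ℝ) ^ m)⁻¹ * η (ε⁻¹ • y)) * G (u (x - y)))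
          - G (∫ y, (((ε : ℝ) ^ m)⁻¹ * η (ε⁻¹ • y)) • u (x - y))|
        ≤ 2 * C₀ * ∫ y, ‖u x - u (x - y)‖ ^ (1 + γ) * (((ε : ℝ) ^ m)⁻¹ * η (ε⁻¹ • y)) := by
  have h1γ : (0:ℝ) < 1 + γ := by linarith
  set φ : (Fin m → ℝ) → ℝ := fun y => ((ε : ℝ) ^ m)⁻¹ * η (ε⁻¹ • y) with hφdef
  have hεm : (0:ℝ) < ε ^ m := pow_pos hε m
  have hφnn : ∀ y, 0 ≤ φ y := fun y => mul_nonneg (inv_nonneg.2 hεm.le) (hηnn _)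
  have hφcont : Continuous φ :=
    continuous_const.mul (hη.continuous.comp (continuous_const_smul ε⁻¹))
  have hφsupp : ∀ y, y ∉ Metric.closedBall (0 : Fin m → ℝ) ε → φ y = 0 := by
    intro y hy
    have hη0 : η (ε⁻¹ • y) = 0 := by
      by_contra h
      have h2 : ε⁻¹ • y ∈ Metric.closedBall (0 : Fin m → ℝ) 1 :=
        hηsupp (Function.mem_support.2 h)
      have h3 : ‖ε⁻¹ • y‖ ≤ 1 := by
        simpa [Metric.mem_closedBall, dist_zero_right] using h2
      rw [norm_smul, Real.norm_eq_abs] at h3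
      apply hy
      simp only [Metric.mem_closedBall, dist_zero_right]
      have habs : |ε⁻¹| = ε⁻¹ := abs_of_pos (inv_pos.2 hε)
      rw [habs] at h3
      calc ‖y‖ = ε * (ε⁻¹ * ‖y‖) := by field_simp
        _ ≤ ε * 1 := by gcongr
        _ = ε := mul_one ε
    simp [hφdef, hη0]
  have hφc : HasCompactSupport φ :=
    HasCompactSupport.intro (isCompact_closedBall (0 : Fin m → ℝ) ε) hφsupp
  have hφint : Integrable φ := hφcont.integrable_of_hasCompactSupport hφc
  have hφone : ∫ y, φ y = 1 := by
    have h1 : ∫ y, η (ε⁻¹ • y) = |((ε⁻¹ ^ Module.finrank ℝ (Fin m → ℝ)))⁻¹| • ∫ z, η z :=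
      Measure.integral_comp_smul (volume) η ε⁻¹
    rw [Module.finrank_fin_fun, hηint] at h1
    have h2 : |((ε⁻¹ ^ m) : ℝ)⁻¹| = ε ^ m := by
      rw [← inv_pow, inv_inv, abs_of_pos hεm]
    rw [h2, smul_eq_mul, mul_one] at h1
    simp only [hφdef]
    rw [integral_const_mul, h1]
    field_simp
  -- essential sup bound
  set M : ℝ := (eLpNorm u ⊤ volume).toReal with hMdef
  have hMne : eLpNormEssSup u volume ≠ ⊤ := by
    rw [← eLpNorm_exponent_top]; exact hub.2.ne
  have hM : ∀ᵐ z ∂(volume : Measure (Fin m → ℝ)), ‖u z‖ ≤ M := by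
    filter_upwards [ae_le_eLpNormEssSup (f := u) (μ := volume)] with z hz
    have h4 : ((‖u z‖₊ : ℝ≥0∞)).toReal ≤ (eLpNormEssSup u volume).toReal :=
      ENNReal.toReal_mono hMne hz
    simpa [hMdef, eLpNorm_exponent_top] using h4
  -- bound for G on the ball
  obtain ⟨K, hK⟩ := (isCompact_closedBall (0 : Fin n → ℝ) M).exists_bound_of_continuousOn
    hG.continuous.continuousOn
  filter_upwards [hM] with x hx
  -- setup at the fixed point x
  have hqmp := (Measure.measurePreserving_sub_left (volume : Measure (Fin m → ℝ)) x).quasiMeasurePreserving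
  have hwmeas : AEStronglyMeasurable (fun y => u (x - y)) volume :=
    hub.1.comp_quasiMeasurePreserving hqmp
  have hwM : ∀ᵐ y ∂(volume : Measure (Fin m → ℝ)), ‖u (x - y)‖ ≤ M := hqmp.ae hM
  set L := fderiv ℝ G (u x) with hLdef
  -- integrabilities
  have hIφw : Integrable (fun y => φ y • u (x - y)) := by
    refine Integrable.mono' (hφint.const_mul M) (hφcont.aestronglyMeasurable.smul hwmeas) ?_
    filter_upwards [hwM] with y hy
    rw [norm_smul, Real.norm_eq_abs, abs_of_nonneg (hφnn y)]
    calc φ y * ‖u (x - y)‖ ≤ φ y * M := by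
          have := hφnn y; gcongr
      _ = M * φ y := mul_comm _ _
  have hIφux : Integrable (fun y => φ y • u x) := hφint.smul_const (u x)
  have hIφdiff : Integrable (fun y => φ y • (u (x - y) - u x)) := by
    have h5 : (fun y => φ y • (u (x - y) - u x))
        = fun y => φ y • u (x - y) - φ y • u x := by
      funext y; rw [smul_sub]
    rw [h5]; exact hIφw.sub hIφux
  have hIGw : Integrable (fun y => φ y * G (u (x - y))) := by
    refine Integrable.mono' (hφint.const_mul ‖K‖)
      (hφcont.aestronglyMeasurable.mul (hG.continuous.comp_aestronglyMeasurable hwmeas)) ?_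
    filter_upwards [hwM] with y hy
    rw [Real.norm_eq_abs, abs_mul, abs_of_nonneg (hφnn y)]
    have h3 : ‖G (u (x - y))‖ ≤ K := hK _ (by
      simp only [Metric.mem_closedBall, dist_zero_right]; exact hy)
    have h3' : |G (u (x - y))| ≤ ‖K‖ := by
      rw [← Real.norm_eq_abs]; exact h3.trans (le_abs_self K)
    calc φ y * |G (u (x - y))| ≤ φ y * ‖K‖ := by
          have := hφnn y; gcongr
      _ = ‖K‖ * φ y := mul_comm _ _
  have hd_meas : AEStronglyMeasurable (fun y => ‖u x - u (x - y)‖ ^ (1 + γ)) volume :=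
    (Real.continuous_rpow_const h1γ.le).comp_aestronglyMeasurable
      ((aestronglyMeasurable_const.sub hwmeas).norm)
  have hdM : ∀ᵐ y ∂(volume : Measure (Fin m → ℝ)), ‖u x - u (x - y)‖ ≤ M + M := by
    filter_upwards [hwM] with y hy
    calc ‖u x - u (x - y)‖ ≤ ‖u x‖ + ‖u (x - y)‖ := norm_sub_le _ _
      _ ≤ M + M := add_le_add hx hy
  have hpow : Integrable (fun y => ‖u x - u (x - y)‖ ^ (1 + γ) * φ y) := by
    refine Integrable.mono' (hφint.const_mul ((M + M) ^ (1 + γ)))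
      (hd_meas.mul hφcont.aestronglyMeasurable) ?_
    filter_upwards [hdM] with y hy
    rw [Real.norm_eq_abs, abs_mul, abs_of_nonneg (hφnn y),
      abs_of_nonneg (Real.rpow_nonneg (norm_nonneg _) _)]
    have h6 : ‖u x - u (x - y)‖ ^ (1 + γ) ≤ (M + M) ^ (1 + γ) :=
      Real.rpow_le_rpow (norm_nonneg _) hy h1γ.le
    have := hφnn y; gcongr
  -- abbreviations
  set v : Fin n → ℝ := ∫ y, φ y • u (x - y) with hvdef'
  set J : ℝ := ∫ y, ‖u x - u (x - y)‖ ^ (1 + γ) * φ y with hJdef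
  have hJ0 : 0 ≤ J := integral_nonneg fun y =>
    mul_nonneg (Real.rpow_nonneg (norm_nonneg _) _) (hφnn y)
  -- v - u x as an integral
  have hvsub : v - u x = ∫ y, φ y • (u (x - y) - u x) := by
    have h2 : (fun y => φ y • (u (x - y) - u x))
        = fun y => φ y • u (x - y) - φ y • u x := by
      funext y; rw [smul_sub]
    rw [h2, integral_sub hIφw hIφux, integral_smul_const, hφone, one_smul, hvdef']
  -- linear term
  have hLmul : (fun y => φ y * L (u (x - y) - u x))
      = fun y => L (φ y • (u (x - y) - u x)) := by
    funext y; rw [L.map_smul]; rfl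
  have hILdiff : Integrable (fun y => φ y * L (u (x - y) - u x)) := by
    rw [hLmul]; exact L.integrable_comp hIφdiff
  have hLint : ∫ y, φ y * L (u (x - y) - u x) = L (v - u x) := by
    rw [hLmul, L.integral_comp_comm hIφdiff, hvsub]
  have hIφGux : Integrable (fun y => φ y * G (u x)) := hφint.mul_const (G (u x))
  -- split
  have hsplit : (∫ y, φ y * G (u (x - y))) - G v
      = (∫ y, φ y * (G (u (x - y)) - G (u x) - L (u (x - y) - u x)))
        + (G (u x) + L (v - u x) - G v) := by
    have e1 : (fun y => φ y * (G (u (x - y)) - G (u x) - L (u (x - y) - u x)))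
        = fun y => (φ y * G (u (x - y)) - φ y * G (u x)) - φ y * L (u (x - y) - u x) := by
      funext y; ring
    have hsub1 : Integrable (fun y => φ y * G (u (x - y)) - φ y * G (u x)) :=
      hIGw.sub hIφGux
    rw [e1, integral_sub hsub1 hILdiff, integral_sub hIGw hIφGux,
      hLint, integral_mul_const, hφone, one_mul]
    ring
  -- bound the first term
  have hA : |∫ y, φ y * (G (u (x - y)) - G (u x) - L (u (x - y) - u x))|
      ≤ C₀ * J := by
    rw [← Real.norm_eq_abs]
    have hbound : ∀ᵐ y ∂(volume : Measure (Fin m → ℝ)),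
        ‖φ y * (G (u (x - y)) - G (u x) - L (u (x - y) - u x))‖
          ≤ C₀ * (‖u x - u (x - y)‖ ^ (1 + γ) * φ y) := by
      refine Filter.Eventually.of_forall fun y => ?_
      rw [Real.norm_eq_abs, abs_mul, abs_of_nonneg (hφnn y)]
      have ht := taylor_est hγ hC₀ hG hHolder (u (x - y)) (u x)
      rw [← hLdef, norm_sub_rev] at ht
      calc φ y * |G (u (x - y)) - G (u x) - L (u (x - y) - u x)|
          ≤ φ y * (C₀ * ‖u x - u (x - y)‖ ^ (1 + γ)) := by
            have := hφnn y; gcongr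
        _ = C₀ * (‖u x - u (x - y)‖ ^ (1 + γ) * φ y) := by ring
    have h5 := norm_integral_le_of_norm_le (hpow.const_mul C₀) hbound
    refine h5.trans (le_of_eq ?_)
    rw [integral_const_mul, hJdef]
  -- Jensen / Hölder step
  have hJensen : ‖v - u x‖ ^ (1 + γ) ≤ J := by
    have h6 : ‖v - u x‖ ≤ ∫ y, φ y * ‖u (x - y) - u x‖ := by
      rw [hvsub]
      refine (norm_integral_le_integral_norm _).trans (le_of_eq ?_)
      refine integral_congr_ae (Filter.Eventually.of_forall fun y => ?_)
      show ‖φ y • (u (x - y) - u x)‖ = φ y * ‖u (x - y) - u x‖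
      rw [norm_smul, Real.norm_eq_abs, abs_of_nonneg (hφnn y)]
    set p : ℝ := (1 + γ) / γ with hpdef
    have hpq : Real.HolderConjugate p (1 + γ) := by
      constructor
      · rw [hpdef, inv_div, inv_one]
        field_simp
        ring
      · rw [hpdef]; positivity
      · linarith
    set f : (Fin m → ℝ) → ℝ := fun y => φ y ^ (γ / (1 + γ)) with hfdef
    set g : (Fin m → ℝ) → ℝ := fun y => φ y ^ (1 / (1 + γ)) * ‖u (x - y) - u x‖ with hgdef
    have hfcont : Continuous f :=
      (Real.continuous_rpow_const (by positivity)).comp hφcont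
    have hfc : HasCompactSupport f :=
      hφc.comp_left (g := fun t : ℝ => t ^ (γ / (1 + γ))) (Real.zero_rpow (by positivity))
    have hgcont1 : Continuous (fun y => φ y ^ (1 / (1 + γ))) :=
      (Real.continuous_rpow_const (by positivity)).comp hφcont
    have hgc1 : HasCompactSupport (fun y => φ y ^ (1 / (1 + γ))) :=
      hφc.comp_left (g := fun t : ℝ => t ^ (1 / (1 + γ))) (Real.zero_rpow (by positivity))
    have hfmem : MemLp f (ENNReal.ofReal p) volume :=
      hfcont.memLp_of_hasCompactSupport hfc
    have hgmem : MemLp g (ENNReal.ofReal (1 + γ)) volume := by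
      have hbmem : MemLp (fun y => (M + M) * φ y ^ (1 / (1 + γ)))
          (ENNReal.ofReal (1 + γ)) volume :=
        (hgcont1.memLp_of_hasCompactSupport hgc1).const_mul (M + M)
      refine hbmem.of_le
        (hgcont1.aestronglyMeasurable.mul (hwmeas.sub aestronglyMeasurable_const).norm) ?_
      filter_upwards [hwM] with y hy
      have h7 : ‖u (x - y) - u x‖ ≤ M + M := by
        calc ‖u (x - y) - u x‖ ≤ ‖u (x - y)‖ + ‖u x‖ := norm_sub_le _ _
          _ ≤ M + M := add_le_add hy hx
      have hrnn : (0:ℝ) ≤ φ y ^ (1 / (1 + γ)) := Real.rpow_nonneg (hφnn y) _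
      simp only [hgdef, Real.norm_eq_abs, abs_mul, abs_of_nonneg hrnn, abs_norm]
      calc φ y ^ (1 / (1 + γ)) * ‖u (x - y) - u x‖
          ≤ φ y ^ (1 / (1 + γ)) * (M + M) := mul_le_mul_of_nonneg_left h7 hrnn
        _ ≤ φ y ^ (1 / (1 + γ)) * |M + M| := mul_le_mul_of_nonneg_left (le_abs_self _) hrnn
        _ = |M + M| * φ y ^ (1 / (1 + γ)) := mul_comm _ _
    have holder := integral_mul_le_Lp_mul_Lq_of_nonneg hpq
      (Filter.Eventually.of_forall fun y => Real.rpow_nonneg (hφnn y) _)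
      (Filter.Eventually.of_forall fun y =>
        mul_nonneg (Real.rpow_nonneg (hφnn y) _) (norm_nonneg _))
      hfmem hgmem
    have hfg : (fun y => f y * g y) = fun y => φ y * ‖u (x - y) - u x‖ := by
      funext y
      have e2 : f y * g y
          = (φ y ^ (γ / (1 + γ)) * φ y ^ (1 / (1 + γ))) * ‖u (x - y) - u x‖ := by
        simp only [hfdef, hgdef]; ring
      have esum : γ / (1 + γ) + 1 / (1 + γ) = 1 := by
        field_simp
        ring
      rw [e2, ← Real.rpow_add' (hφnn y) (by rw [esum]; norm_num), esum, Real.rpow_one]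
    have hfp : (fun y => f y ^ p) = φ := by
      funext y
      have e3 : γ / (1 + γ) * p = 1 := by
        rw [hpdef]; field_simp
      simp only [hfdef]
      rw [← Real.rpow_mul (hφnn y), e3, Real.rpow_one]
    have hgq : (fun y => g y ^ (1 + γ)) = fun y => φ y * ‖u (x - y) - u x‖ ^ (1 + γ) := by
      funext y
      have e4 : 1 / (1 + γ) * (1 + γ) = 1 := by field_simp
      simp only [hgdef]
      rw [Real.mul_rpow (Real.rpow_nonneg (hφnn y) _) (norm_nonneg _),
        ← Real.rpow_mul (hφnn y), e4, Real.rpow_one]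
    rw [hfg, hfp, hgq, hφone, Real.one_rpow, one_mul] at holder
    have hJ' : ∫ y, φ y * ‖u (x - y) - u x‖ ^ (1 + γ) = J := by
      rw [hJdef]
      refine integral_congr_ae (Filter.Eventually.of_forall fun y => ?_)
      show φ y * ‖u (x - y) - u x‖ ^ (1 + γ) = ‖u x - u (x - y)‖ ^ (1 + γ) * φ y
      rw [norm_sub_rev, mul_comm]
    rw [hJ'] at holder
    have h8 : ‖v - u x‖ ≤ J ^ (1 / (1 + γ)) := h6.trans holder
    have h9 : ‖v - u x‖ ^ (1 + γ) ≤ (J ^ (1 / (1 + γ))) ^ (1 + γ) :=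
      Real.rpow_le_rpow (norm_nonneg _) h8 h1γ.le
    refine h9.trans (le_of_eq ?_)
    rw [← Real.rpow_mul hJ0]
    rw [show (1 / (1 + γ)) * (1 + γ) = 1 by field_simp, Real.rpow_one]
  -- bound the second term
  have hB : |G (u x) + L (v - u x) - G v| ≤ C₀ * J := by
    have ht := taylor_est hγ hC₀ hG hHolder v (u x)
    rw [← hLdef] at ht
    have h8 : C₀ * ‖v - u x‖ ^ (1 + γ) ≤ C₀ * J := by gcongr
    rw [show G (u x) + L (v - u x) - G v = -(G v - G (u x) - L (v - u x)) by ring, abs_neg]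
    exact ht.trans h8
  calc |(∫ y, φ y * G (u (x - y))) - G v|
      = |(∫ y, φ y * (G (u (x - y)) - G (u x) - L (u (x - y) - u x)))
          + (G (u x) + L (v - u x) - G v)| := by rw [hsplit]
    _ ≤ |∫ y, φ y * (G (u (x - y)) - G (u x) - L (u (x - y) - u x))|
          + |G (u x) + L (v - u x) - G v| := abs_add_le _ _
    _ ≤ C₀ * J + C₀ * J := add_le_add hA hB
    _ = 2 * C₀ * J := by ring
end

section
/- Let γ ∈ (0,1), 1 ≤ q < ∞. Suppose G : ℝⁿ → ℝ is C¹ with γ-Hölder gradient (constant C₀), and u : ℝ^m → ℝⁿ satisfies the Besov-VMO condition (1/ε)∫ ⨍_{B_ε(x)} |u(x) - u(y)|^{q(1+γ)} dy dx ≤ ω(ε). Then with a standard mollifier η^ε, ‖G(u * η^ε) - G(u) * η^ε‖_{L^q}^q ≤ C (ε ω(ε)), for a constant C depending only on C₀, q, γ, and η. -/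
open MeasureTheory Metric Set
open scoped ENNReal

private lemma aux_two_rpow (a b : ℝ≥0∞) {r : ℝ} (hr : 0 ≤ r) :
    (a + b) ^ r ≤ 2 ^ r * (a ^ r + b ^ r) := by
  have h1 : a + b ≤ 2 * (a ⊔ b) := by
    rw [two_mul]; exact add_le_add le_sup_left le_sup_right
  calc (a + b) ^ r ≤ (2 * (a ⊔ b)) ^ r := ENNReal.rpow_le_rpow h1 hr
    _ = 2 ^ r * (a ⊔ b) ^ r := ENNReal.mul_rpow_of_nonneg _ _ hr
    _ ≤ 2 ^ r * (a ^ r + b ^ r) := by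
        gcongr
        rcases le_total a b with h | h
        · rw [sup_eq_right.2 h]; exact le_add_self
        · rw [sup_eq_left.2 h]; exact le_self_add

private lemma aux_jensen {α : Type*} [MeasurableSpace α] {μ : Measure α} {k g : α → ℝ≥0∞}
    (hk : AEMeasurable k μ) (hg : AEMeasurable g μ) (hk_top : ∀ a, k a ≠ ∞)
    (hk1 : ∫⁻ a, k a ∂μ = 1) {r : ℝ} (hr : 1 ≤ r) :
    ∫⁻ a, k a * g a ∂μ ≤ (∫⁻ a, k a * g a ^ r ∂μ) ^ (1 / r) := by
  rcases eq_or_lt_of_le hr with h1 | h1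
  · simp [← h1]
  have hr0 : (0:ℝ) < r := lt_trans one_pos h1
  have hr1 : r - 1 ≠ 0 := sub_ne_zero.2 (ne_of_gt h1)
  have hpq : (r / (r - 1)).HolderConjugate r := (Real.HolderConjugate.conjExponent h1).symm
  set f : α → ℝ≥0∞ := fun a => k a ^ (1 - 1 / r) with hf_def
  set g₁ : α → ℝ≥0∞ := fun a => k a ^ (1 / r) * g a with hg1_def
  have idA : ∀ a, k a * g a = f a * g₁ a := by
    intro a
    have e1 : (0:ℝ) < 1 - 1/r := by
      rw [sub_pos, div_lt_one hr0]; exact h1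
    have e2 : (0:ℝ) < 1/r := by positivity
    by_cases hka : k a = 0
    · simp only [hf_def, hg1_def, hka, ENNReal.zero_rpow_of_pos e1, ENNReal.zero_rpow_of_pos e2,
        zero_mul]
    · rw [hf_def, hg1_def, ← mul_assoc, ← ENNReal.rpow_add _ _ hka (hk_top a)]
      norm_num
  have idB : ∫⁻ a, f a ^ (r / (r - 1)) ∂μ = 1 := by
    rw [← hk1]
    refine lintegral_congr fun a => ?_
    rw [hf_def, ← ENNReal.rpow_mul]
    have : (1 - 1 / r) * (r / (r - 1)) = 1 := by field_simp
    rw [this, ENNReal.rpow_one]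
  have idC : ∀ a, g₁ a ^ r = k a * g a ^ r := by
    intro a
    rw [hg1_def, ENNReal.mul_rpow_of_nonneg _ _ hr0.le, ← ENNReal.rpow_mul,
      one_div_mul_cancel hr0.ne', ENNReal.rpow_one]
  calc ∫⁻ a, k a * g a ∂μ = ∫⁻ a, (f * g₁) a ∂μ := lintegral_congr fun a => idA a
    _ ≤ (∫⁻ a, f a ^ (r / (r-1)) ∂μ) ^ (1 / (r / (r-1))) * (∫⁻ a, g₁ a ^ r ∂μ) ^ (1 / r) :=
        ENNReal.lintegral_mul_le_Lp_mul_Lq μ hpq (hk.pow_const _) ((hk.pow_const _).mul hg)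
    _ = (∫⁻ a, k a * g a ^ r ∂μ) ^ (1 / r) := by
        rw [idB, ENNReal.one_rpow, one_mul]
        congr 1
        exact lintegral_congr fun a => idC a

private lemma aux_taylor {E : Type*} [NormedAddCommGroup E] [NormedSpace ℝ E] {G : E → ℝ}
    {γ C₀ : ℝ} (hγ : 0 < γ) (hG : ContDiff ℝ 1 G)
    (hHolder : ∀ y z, ‖fderiv ℝ G y - fderiv ℝ G z‖ ≤ C₀ * ‖y - z‖ ^ γ) (a b : E) :
    ‖G a - G b - fderiv ℝ G b (a - b)‖ ≤ C₀ * ‖a - b‖ ^ (1 + γ) := by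
  have hdiff := hG.differentiable one_ne_zero
  by_cases hab : a = b
  · subst hab
    simp [Real.zero_rpow (by positivity : (1:ℝ)+γ ≠ 0)]
  have hC₀ : 0 ≤ C₀ := by
    have := hHolder a b
    have h2 : (0:ℝ) ≤ ‖fderiv ℝ G a - fderiv ℝ G b‖ := norm_nonneg _
    nlinarith [Real.rpow_pos_of_pos (norm_pos_iff.2 (sub_ne_zero.2 hab)) γ]
  have key := (convex_segment b a).norm_image_sub_le_of_norm_hasFDerivWithin_le'
    (f' := fun z => fderiv ℝ G z) (φ := fderiv ℝ G b) (C := C₀ * ‖a - b‖ ^ γ)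
    (fun z _ => (hdiff z).hasFDerivAt.hasFDerivWithinAt)
    (fun z hz => by
      refine le_trans (hHolder z b) ?_
      have hzb : ‖z - b‖ ≤ ‖a - b‖ := by
        obtain ⟨s, t, hs, ht, hst, rfl⟩ := hz
        have : s • b + t • a - b = t • (a - b) := by
          have hs' : s = 1 - t := by linarith
          rw [hs']; module
        rw [this, norm_smul, Real.norm_eq_abs, abs_of_nonneg ht]
        nlinarith [norm_nonneg (a - b)]
      exact mul_le_mul_of_nonneg_left (Real.rpow_le_rpow (norm_nonneg _) hzb hγ.le) hC₀)
    (left_mem_segment ℝ b a) (right_mem_segment ℝ b a)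
  refine le_trans key (le_of_eq ?_)
  have hre : ‖a - b‖ ^ ((1:ℝ) + γ) = ‖a - b‖ ^ γ * ‖a - b‖ := by
    rw [Real.rpow_add (norm_pos_iff.2 (sub_ne_zero.2 hab)), Real.rpow_one, mul_comm]
  rw [hre, mul_assoc]

private lemma aux_growth {E : Type*} [NormedAddCommGroup E] [NormedSpace ℝ E] {G : E → ℝ}
    {γ C₀ : ℝ} (hγ : 0 < γ) (hG : ContDiff ℝ 1 G)
    (hHolder : ∀ y z, ‖fderiv ℝ G y - fderiv ℝ G z‖ ≤ C₀ * ‖y - z‖ ^ γ) (a : E) :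
    ‖G a‖ ≤ ‖G 0‖ + ‖fderiv ℝ G 0‖ * ‖a‖ + C₀ * ‖a‖ ^ (1 + γ) := by
  have h := aux_taylor hγ hG hHolder a 0
  simp only [sub_zero] at h
  have h2 : ‖fderiv ℝ G 0 a‖ ≤ ‖fderiv ℝ G 0‖ * ‖a‖ := (fderiv ℝ G 0).le_opNorm a
  calc ‖G a‖ = ‖(G a - G 0 - fderiv ℝ G 0 a) + G 0 + fderiv ℝ G 0 a‖ := by ring_nf
    _ ≤ ‖G a - G 0 - fderiv ℝ G 0 a‖ + ‖G 0‖ + ‖fderiv ℝ G 0 a‖ := norm_add₃_le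
    _ ≤ C₀ * ‖a‖ ^ (1+γ) + ‖G 0‖ + ‖fderiv ℝ G 0‖ * ‖a‖ := by gcongr
    _ = ‖G 0‖ + ‖fderiv ℝ G 0‖ * ‖a‖ + C₀ * ‖a‖ ^ (1+γ) := by ring

private lemma aux_translate_full {E : Type*} [NormedAddCommGroup E] [MeasurableSpace E]
    [BorelSpace E] {μ : Measure E} [μ.IsAddLeftInvariant] [μ.IsNegInvariant]
    (g : E → ℝ≥0∞) (x : E) :
    ∫⁻ y, g (x - y) ∂μ = ∫⁻ z, g z ∂μ :=
  (Measure.measurePreserving_sub_left μ x).lintegral_comp_emb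
    (MeasurableEquiv.subLeft x).measurableEmbedding g

private lemma aux_translate_ball {E : Type*} [NormedAddCommGroup E] [MeasurableSpace E]
    [BorelSpace E] {μ : Measure E} [μ.IsAddLeftInvariant] [μ.IsNegInvariant]
    (g : E → ℝ≥0∞) (x : E) (ε : ℝ) :
    ∫⁻ y in closedBall 0 ε, g (x - y) ∂μ = ∫⁻ z in closedBall x ε, g z ∂μ := by
  have h := (Measure.measurePreserving_sub_left μ x).setLIntegral_comp_preimage_emb
    (MeasurableEquiv.subLeft x).measurableEmbedding g (closedBall x ε)
  have hpre : (fun y => x - y) ⁻¹' closedBall x ε = closedBall 0 ε := by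
    ext y
    simp [Metric.mem_closedBall, dist_eq_norm]
  rw [← hpre]
  exact h

private lemma aux_ae_translate {E : Type*} {β : Type*} [NormedAddCommGroup E] [MeasurableSpace E]
    [BorelSpace E] {μ : Measure E} [μ.IsAddLeftInvariant] [μ.IsNegInvariant]
    {u u' : E → β} (h : u =ᵐ[μ] u') (x : E) :
    (fun y => u (x - y)) =ᵐ[μ] (fun y => u' (x - y)) :=
  (Measure.measurePreserving_sub_left μ x).quasiMeasurePreserving.ae_eq_comp h

set_option maxHeartbeats 1000000 in
/-- Commutator estimate in `L^q`: for `G ∈ C^{1,γ}` and `u` satisfying the Besov-VMO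
condition of exponent `q(1+γ)`, `‖G(u * η^ε) - G(u) * η^ε‖_{L^q}^q ≤ C ε ω(ε)`. -/
theorem stmt_7 {m n : ℕ} (γ C₀ : ℝ) (hγ : 0 < γ) (hγ1 : γ < 1) (hC₀ : 0 ≤ C₀)
    (q : ℝ) (hq : 1 ≤ q)
    (G : (Fin n → ℝ) → ℝ) (hG : ContDiff ℝ 1 G)
    (hHolder : ∀ y z, ‖fderiv ℝ G y - fderiv ℝ G z‖ ≤ C₀ * ‖y - z‖ ^ γ)
    (u : (Fin m → ℝ) → (Fin n → ℝ))
    (hu : MemLp u (ENNReal.ofReal (q * (1 + γ))) volume)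
    (ω : ℝ → ℝ) (hωnn : ∀ ε, 0 ≤ ω ε) (ε₀ : ℝ) (hε₀ : 0 < ε₀)
    (hVMO : ∀ ε : ℝ, 0 < ε → ε < ε₀ →
      (1 / ε) * ∫ x, ⨍ y in Metric.ball x ε, ‖u x - u y‖ ^ (q * (1 + γ)) ≤ ω ε)
    (η : (Fin m → ℝ) → ℝ) (hη : ContDiff ℝ (⊤ : ℕ∞) η) (hηc : HasCompactSupport η)
    (hηnn : ∀ x, 0 ≤ η x) (hηint : ∫ x, η x = 1)
    (hηsupp : Function.support η ⊆ Metric.closedBall 0 1) :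
    ∃ C > 0, ∀ ε : ℝ, 0 < ε → ε < ε₀ →
      (eLpNorm
          (fun x => G (∫ y, (((ε : ℝ) ^ m)⁻¹ * η (ε⁻¹ • y)) • u (x - y))
            - ∫ y, (((ε : ℝ) ^ m)⁻¹ * η (ε⁻¹ • y)) * G (u (x - y)))
          (ENNReal.ofReal q) volume).toReal ^ q
        ≤ C * (ε * ω ε) := by
  have hq0 : (0:ℝ) < q := lt_of_lt_of_le one_pos hq
  have h1γ : (1:ℝ) ≤ 1 + γ := by linarith
  have h1γ0 : (0:ℝ) < 1 + γ := by linarith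
  set p : ℝ := q * (1 + γ) with hp_def
  have hp1 : 1 ≤ p := by nlinarith
  have hp0 : (0:ℝ) < p := lt_of_lt_of_le one_pos hp1
  have hγp : 1 + γ ≤ p := by nlinarith
  -- measurable representative
  obtain ⟨u', hu'sm, huu'⟩ : ∃ u' : (Fin m → ℝ) → (Fin n → ℝ),
      StronglyMeasurable u' ∧ u =ᵐ[volume] u' :=
    ⟨hu.1.mk u, hu.1.stronglyMeasurable_mk, hu.1.ae_eq_mk⟩
  have hu'm : Measurable u' := hu'sm.measurable
  have hu'p : MemLp u' (ENNReal.ofReal p) volume := hu.ae_eq huu'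
  have hIp : ∫⁻ z, (‖u' z‖₊ : ℝ≥0∞) ^ p ∂volume < ∞ := by
    have h := hu'p.eLpNorm_lt_top
    rw [eLpNorm_eq_lintegral_rpow_enorm_toReal (by simpa using hp0) ENNReal.ofReal_ne_top,
      ENNReal.toReal_ofReal hp0.le] at h
    simp only [enorm_eq_nnnorm] at h
    by_contra hcon
    push_neg at hcon
    rw [top_le_iff.mp hcon, ENNReal.top_rpow_of_pos (by positivity)] at h
    exact absurd h (by simp)
  have hur : ∀ r : ℝ, 0 < r → r ≤ p → ∀ s : Set (Fin m → ℝ), volume s < ∞ →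
      ∫⁻ z in s, (‖u' z‖₊ : ℝ≥0∞) ^ r ∂volume < ∞ := by
    intro r hr hrp s hs
    have hb : ∀ z, (‖u' z‖₊ : ℝ≥0∞) ^ r ≤ 1 + (‖u' z‖₊ : ℝ≥0∞) ^ p := by
      intro z
      rcases le_total ((‖u' z‖₊ : ℝ≥0∞)) 1 with h | h
      · exact le_trans (le_trans (ENNReal.rpow_le_rpow h hr.le)
          (by rw [ENNReal.one_rpow])) le_self_add
      · exact le_trans (ENNReal.rpow_le_rpow_of_exponent_le h hrp) le_add_self
    calc ∫⁻ z in s, (‖u' z‖₊ : ℝ≥0∞) ^ r ∂volume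
        ≤ ∫⁻ z in s, (1 + (‖u' z‖₊ : ℝ≥0∞) ^ p) ∂volume := lintegral_mono fun z => hb z
      _ ≤ volume s + ∫⁻ z in s, (‖u' z‖₊ : ℝ≥0∞) ^ p ∂volume := by
          rw [lintegral_add_left measurable_const]
          simp
      _ ≤ volume s + ∫⁻ z, (‖u' z‖₊ : ℝ≥0∞) ^ p ∂volume := by
          gcongr
          exact Measure.restrict_le_self
      _ < ∞ := ENNReal.add_lt_top.2 ⟨hs, hIp⟩
  -- bound on η
  obtain ⟨Mη, hMη⟩ := hηc.exists_bound_of_continuous hη.continuous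
  have hMη0 : 0 ≤ Mη := le_trans (norm_nonneg _) (hMη 0)
  have hηle : ∀ x, η x ≤ Mη := fun x => le_trans (le_abs_self _) (hMη x)
  -- constants
  set K : ℝ≥0∞ := (ENNReal.ofReal C₀ * 2 ^ ((2:ℝ)+γ)) ^ q with hK_def
  have hK_ne_top : K ≠ ∞ := by
    rw [hK_def]
    refine (ENNReal.rpow_lt_top_of_nonneg hq0.le ?_).ne
    exact (ENNReal.mul_lt_top ENNReal.ofReal_lt_top
      (ENNReal.rpow_lt_top_of_nonneg (by linarith) (by norm_num))).ne
  set c₁ : ℝ := K.toReal * (Mη * 2 ^ m) with hc₁_def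
  have hc₁ : 0 ≤ c₁ := by positivity
  refine ⟨c₁ + 1, by positivity, fun ε hε hεε₀ => ?_⟩
  have hεm : (0:ℝ) < ε ^ m := pow_pos hε m
  set k : (Fin m → ℝ) → ℝ := fun y => (ε ^ m)⁻¹ * η (ε⁻¹ • y) with hk_def
  have hknn : ∀ y, 0 ≤ k y := fun y => mul_nonneg (by positivity) (hηnn _)
  have hkcont : Continuous k :=
    continuous_const.mul (hη.continuous.comp (continuous_id.const_smul ε⁻¹))
  have hksupp : ∀ y, y ∉ Metric.closedBall (0 : Fin m → ℝ) ε → k y = 0 := by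
    intro y hy
    have : η (ε⁻¹ • y) = 0 := by
      by_contra hne
      have h1 : ε⁻¹ • y ∈ Metric.closedBall (0 : Fin m → ℝ) 1 :=
        hηsupp (Function.mem_support.2 hne)
      rw [Metric.mem_closedBall, dist_zero_right] at h1
      apply hy
      rw [Metric.mem_closedBall, dist_zero_right]
      have : ‖ε⁻¹ • y‖ = ε⁻¹ * ‖y‖ := by
        rw [norm_smul, Real.norm_eq_abs, abs_of_nonneg (by positivity)]
      rw [this] at h1
      calc ‖y‖ = ε * (ε⁻¹ * ‖y‖) := by field_simp
        _ ≤ ε * 1 := by gcongr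
        _ = ε := mul_one ε
    rw [hk_def]
    simp [this]
  have hkb : ∀ y, k y ≤ (ε^m)⁻¹ * Mη := fun y => by
    rw [hk_def]
    exact mul_le_mul_of_nonneg_left (hηle _) (by positivity)
  have hkcs : HasCompactSupport k :=
    HasCompactSupport.intro (isCompact_closedBall _ _) hksupp
  have hkint : Integrable k volume := hkcont.integrable_of_hasCompactSupport hkcs
  have hk1 : ∫ y, k y = 1 := by
    rw [hk_def]
    simp only []
    rw [MeasureTheory.integral_const_mul,
      MeasureTheory.Measure.integral_comp_inv_smul_of_nonneg volume η hε.le, hηint,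
      Module.finrank_pi, Fintype.card_fin, smul_eq_mul, mul_one]
    field_simp
  set kk : (Fin m → ℝ) → ℝ≥0∞ := fun y => ENNReal.ofReal (k y) with hkk_def
  have hkken : ∀ y, kk y ≠ ∞ := fun y => ENNReal.ofReal_ne_top
  have hkkm : Measurable kk := ENNReal.measurable_ofReal.comp hkcont.measurable
  have hkk1 : ∫⁻ y, kk y ∂volume = 1 := by
    rw [hkk_def]
    simp only []
    rw [← ofReal_integral_eq_lintegral_ofReal hkint (ae_of_all _ hknn), hk1, ENNReal.ofReal_one]
  have hkkb : ∀ y, kk y ≤ (Metric.closedBall (0 : Fin m → ℝ) ε).indicator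
      (fun _ => ENNReal.ofReal ((ε^m)⁻¹ * Mη)) y := by
    intro y
    by_cases hy : y ∈ Metric.closedBall (0 : Fin m → ℝ) ε
    · rw [Set.indicator_of_mem hy]
      exact ENNReal.ofReal_le_ofReal (hkb y)
    · rw [Set.indicator_of_notMem hy, hkk_def]
      simp [hksupp y hy]
  -- translated integrability
  have hw_int : ∀ (x : Fin m → ℝ) (r : ℝ), 0 < r → r ≤ p →
      ∫⁻ y in Metric.closedBall 0 ε, (‖u' (x - y)‖₊ : ℝ≥0∞) ^ r ∂volume < ∞ := by
    intro x r hr hrp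
    rw [aux_translate_ball (fun z => (‖u' z‖₊ : ℝ≥0∞) ^ r) x ε]
    exact hur r hr hrp _ measure_closedBall_lt_top
  -- the mollified function and commutator
  set v : (Fin m → ℝ) → (Fin n → ℝ) := fun x => ∫ y, k y • u' (x - y) with hv_def
  set F : (Fin m → ℝ) → ℝ := fun x => G (v x) - ∫ y, k y * G (u' (x - y)) with hF_def
  have hFeq : (fun x => G (∫ y, (((ε:ℝ) ^ m)⁻¹ * η (ε⁻¹ • y)) • u (x - y))
      - ∫ y, (((ε:ℝ) ^ m)⁻¹ * η (ε⁻¹ • y)) * G (u (x - y))) = F := by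
    funext x
    have hae := aux_ae_translate (μ := (volume : Measure (Fin m → ℝ))) huu' x
    have h1 : ∫ y, (((ε:ℝ) ^ m)⁻¹ * η (ε⁻¹ • y)) • u (x - y) = v x := by
      refine integral_congr_ae (hae.mono fun y hy => ?_)
      simp only at hy
      simp only [hk_def]
      rw [hy]
    have h2 : ∫ y, (((ε:ℝ) ^ m)⁻¹ * η (ε⁻¹ • y)) * G (u (x - y))
        = ∫ y, k y * G (u' (x - y)) := by
      refine integral_congr_ae (hae.mono fun y hy => ?_)
      simp only at hy
      simp only [hk_def]
      rw [hy]
    rw [hF_def]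
    simp only []
    rw [h1, h2]
  rw [hFeq]
  -- pointwise integrability facts
  have hw_sm : ∀ x : Fin m → ℝ, StronglyMeasurable fun y => u' (x - y) :=
    fun x => hu'sm.comp_measurable (measurable_const.sub measurable_id)
  have hw_m : ∀ x : Fin m → ℝ, Measurable fun y => u' (x - y) := fun x => (hw_sm x).measurable
  have hcut : ∀ g : (Fin m → ℝ) → ℝ≥0∞, ∫⁻ y, kk y * g y ∂volume ≤
      ENNReal.ofReal ((ε^m)⁻¹ * Mη) * ∫⁻ y in Metric.closedBall 0 ε, g y ∂volume := by
    intro g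
    calc ∫⁻ y, kk y * g y ∂volume
        ≤ ∫⁻ y, (Metric.closedBall (0 : Fin m → ℝ) ε).indicator
            (fun _ => ENNReal.ofReal ((ε^m)⁻¹ * Mη)) y * g y ∂volume :=
          lintegral_mono fun y => mul_le_mul_left (hkkb y) _
      _ = ∫⁻ y, (Metric.closedBall (0 : Fin m → ℝ) ε).indicator
            (fun y => ENNReal.ofReal ((ε^m)⁻¹ * Mη) * g y) y ∂volume := by
          refine lintegral_congr fun y => ?_
          by_cases hy : y ∈ Metric.closedBall (0 : Fin m → ℝ) ε
          · simp [hy]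
          · simp [hy]
      _ = ∫⁻ y in Metric.closedBall (0 : Fin m → ℝ) ε,
            ENNReal.ofReal ((ε^m)⁻¹ * Mη) * g y ∂volume :=
          lintegral_indicator measurableSet_closedBall _
      _ = ENNReal.ofReal ((ε^m)⁻¹ * Mη) * ∫⁻ y in Metric.closedBall 0 ε, g y ∂volume :=
          lintegral_const_mul' _ _ ENNReal.ofReal_ne_top
  have hsmul_nnnorm : ∀ (x y : Fin m → ℝ),
      (‖k y • u' (x - y)‖₊ : ℝ≥0∞) = kk y * (‖u' (x - y)‖₊ : ℝ≥0∞) := by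
    intro x y
    rw [nnnorm_smul, ENNReal.coe_mul, hkk_def]
    simp only []
    rw [← Real.enorm_eq_ofReal (hknn y)]
    rfl
  have hmain_smul : ∀ x, Integrable (fun y => k y • u' (x - y)) volume := by
    intro x
    refine ⟨hkcont.aestronglyMeasurable.smul (hw_sm x).aestronglyMeasurable, ?_⟩
    rw [hasFiniteIntegral_def]
    have h1 : ∫⁻ y, (‖k y • u' (x - y)‖₊ : ℝ≥0∞) ∂volume
        = ∫⁻ y, kk y * (‖u' (x - y)‖₊ : ℝ≥0∞) ∂volume :=
      lintegral_congr fun y => hsmul_nnnorm x y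
    rw [show ∫⁻ y, ‖k y • u' (x - y)‖ₑ ∂volume = _ from h1]
    refine lt_of_le_of_lt (hcut _) ?_
    have h2 := hw_int x 1 one_pos hp1
    simp only [ENNReal.rpow_one] at h2
    exact ENNReal.mul_lt_top ENNReal.ofReal_lt_top h2
  -- growth of G
  set cG : ℝ := ‖G 0‖ + ‖fderiv ℝ G 0‖ + C₀ with hcG_def
  have hcG0 : 0 ≤ cG := by positivity
  have hGb : ∀ a : Fin n → ℝ, (‖G a‖₊ : ℝ≥0∞) ≤ ENNReal.ofReal cG *
      (1 + (‖a‖₊ : ℝ≥0∞) + (‖a‖₊ : ℝ≥0∞) ^ ((1:ℝ)+γ)) := by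
    intro a
    have h := aux_growth hγ hG hHolder a
    have hrnn : (0:ℝ) ≤ ‖a‖ ^ ((1:ℝ)+γ) := Real.rpow_nonneg (norm_nonneg a) _
    have h2 : ‖G a‖ ≤ cG * (1 + ‖a‖ + ‖a‖ ^ ((1:ℝ)+γ)) := by
      rw [hcG_def]
      nlinarith [norm_nonneg (G 0), norm_nonneg (fderiv ℝ G 0), norm_nonneg a,
        norm_nonneg (G a)]
    rw [← enorm_eq_nnnorm, ← ofReal_norm]
    refine le_trans (ENNReal.ofReal_le_ofReal h2) ?_
    rw [ENNReal.ofReal_mul hcG0]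
    refine mul_le_mul_right (le_of_eq ?_) _
    rw [ENNReal.ofReal_add (by positivity) hrnn, ENNReal.ofReal_add zero_le_one (norm_nonneg a),
      ENNReal.ofReal_one, ← ENNReal.ofReal_rpow_of_nonneg (norm_nonneg a) h1γ0.le,
      ofReal_norm, enorm_eq_nnnorm]
  have hmain_mulG : ∀ x, Integrable (fun y => k y * G (u' (x - y))) volume := by
    intro x
    refine ⟨hkcont.aestronglyMeasurable.mul
      ((hG.continuous.comp_stronglyMeasurable (hw_sm x)).aestronglyMeasurable), ?_⟩
    rw [hasFiniteIntegral_def]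
    have h1 : ∫⁻ y, (‖k y * G (u' (x - y))‖₊ : ℝ≥0∞) ∂volume
        = ∫⁻ y, kk y * (‖G (u' (x - y))‖₊ : ℝ≥0∞) ∂volume := by
      refine lintegral_congr fun y => ?_
      rw [nnnorm_mul, ENNReal.coe_mul, hkk_def]
      simp only []
      rw [← Real.enorm_eq_ofReal (hknn y)]
      rfl
    rw [show ∫⁻ y, ‖k y * G (u' (x - y))‖ₑ ∂volume = _ from h1]
    refine lt_of_le_of_lt (hcut _) (ENNReal.mul_lt_top ENNReal.ofReal_lt_top ?_)
    have hb2 : ∫⁻ y in Metric.closedBall (0 : Fin m → ℝ) ε, (‖G (u' (x - y))‖₊ : ℝ≥0∞) ∂volume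
        ≤ ENNReal.ofReal cG * ∫⁻ y in Metric.closedBall (0 : Fin m → ℝ) ε,
            (1 + (‖u' (x - y)‖₊ : ℝ≥0∞) + (‖u' (x - y)‖₊ : ℝ≥0∞) ^ ((1:ℝ)+γ)) ∂volume := by
      rw [← lintegral_const_mul' _ _ ENNReal.ofReal_ne_top]
      exact lintegral_mono fun y => hGb _
    refine lt_of_le_of_lt hb2 (ENNReal.mul_lt_top ENNReal.ofReal_lt_top ?_)
    have hmeas1 : Measurable fun y : Fin m → ℝ => (‖u' (x - y)‖₊ : ℝ≥0∞) :=
      (hw_m x).enorm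
    rw [lintegral_add_left (show Measurable fun y : Fin m → ℝ => 1 + (‖u' (x - y)‖₊ : ℝ≥0∞) from
      measurable_const.add hmeas1), lintegral_add_left measurable_const]
    have e1 := hw_int x 1 one_pos hp1
    simp only [ENNReal.rpow_one] at e1
    have e2 := hw_int x (1+γ) h1γ0 hγp
    refine ENNReal.add_lt_top.2 ⟨ENNReal.add_lt_top.2 ⟨?_, e1⟩, e2⟩
    rw [setLIntegral_const]
    exact ENNReal.mul_lt_top (by simp) measure_closedBall_lt_top
  -- pointwise estimate
  set B : (Fin m → ℝ) → (Fin m → ℝ) → ℝ≥0∞ :=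
    fun x y => (‖u' x - u' (x - y)‖₊ : ℝ≥0∞) with hB_def
  set S : (Fin m → ℝ) → ℝ≥0∞ := fun x => ∫⁻ y, kk y * B x y ^ p ∂volume with hS_def
  have hBm : ∀ x, Measurable (B x) := fun x => ((hw_m x).const_sub (u' x)).enorm
  have h2ne : ((2:ℝ≥0∞) ^ ((1:ℝ)+γ)) ≠ ∞ :=
    (ENNReal.rpow_lt_top_of_nonneg h1γ0.le (by norm_num)).ne
  have hpow_eq : ∀ s : ℝ≥0∞, (s ^ (1/p)) ^ ((1:ℝ)+γ) = s ^ (1/q) := by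
    intro s
    rw [← ENNReal.rpow_mul]
    congr 1
    rw [hp_def]
    field_simp
  have hpoint : ∀ x, (‖F x‖₊ : ℝ≥0∞) ^ q ≤ K * S x := by
    intro x
    set D : (Fin n → ℝ) →L[ℝ] ℝ := fderiv ℝ G (v x) with hD_def
    -- F x as a single integral
    have int1 : Integrable (fun y => k y * (G (v x) - G (u' (x - y)))) volume := by
      have heq : (fun y => k y * (G (v x) - G (u' (x - y))))
          = fun y => k y * G (v x) - k y * G (u' (x - y)) := by funext y; ring
      rw [heq]
      exact (hkint.mul_const _).sub (hmain_mulG x)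
    have int2 : Integrable (fun y => k y • D (v x - u' (x - y))) volume := by
      have heq : (fun y => k y • D (v x - u' (x - y)))
          = fun y => k y • D (v x) - D (k y • u' (x - y)) := by
        funext y
        rw [map_sub, smul_sub]
        congr 1
        exact (D.map_smul _ _).symm
      rw [heq]
      exact (hkint.smul_const _).sub (D.integrable_comp (hmain_smul x))
    have e2 : ∫ y, k y * (G (v x) - G (u' (x - y))) ∂volume = F x := by
      have heq : (fun y => k y * (G (v x) - G (u' (x - y))))
          = fun y => k y * G (v x) - k y * G (u' (x - y)) := by funext y; ring
      rw [heq, integral_sub (hkint.mul_const _) (hmain_mulG x), integral_mul_const, hk1,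
        one_mul, hF_def]
    have e3 : ∫ y, k y • D (v x - u' (x - y)) ∂volume = 0 := by
      have heq : (fun y => k y • D (v x - u' (x - y)))
          = fun y => k y • D (v x) - D (k y • u' (x - y)) := by
        funext y
        rw [map_sub, smul_sub]
        congr 1
        exact (D.map_smul _ _).symm
      rw [heq, integral_sub (hkint.smul_const _) (D.integrable_comp (hmain_smul x)),
        integral_smul_const, hk1, one_smul, D.integral_comp_comm (hmain_smul x)]
      exact sub_eq_zero.2 rfl
    have e4 : F x = ∫ y, (k y * (G (v x) - G (u' (x - y)))
        - k y • D (v x - u' (x - y))) ∂volume := by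
      rw [integral_sub int1 int2, e3, sub_zero, e2]
    -- enorm bound via Taylor
    have hF1 : (‖F x‖₊ : ℝ≥0∞) ≤ ENNReal.ofReal C₀ *
        ∫⁻ y, kk y * (‖v x - u' (x - y)‖₊ : ℝ≥0∞) ^ ((1:ℝ)+γ) ∂volume := by
      rw [e4, ← lintegral_const_mul' _ _ ENNReal.ofReal_ne_top]
      refine le_trans (enorm_integral_le_lintegral_enorm _) (lintegral_mono fun y => ?_)
      have hfac : k y * (G (v x) - G (u' (x - y))) - k y • D (v x - u' (x - y))
          = k y • (G (v x) - G (u' (x - y)) - D (v x - u' (x - y))) := by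
        simp only [smul_eq_mul]
        ring
      rw [hfac, enorm_eq_nnnorm, nnnorm_smul, ENNReal.coe_mul]
      have htay : ‖G (v x) - G (u' (x - y)) - D (v x - u' (x - y))‖
          ≤ C₀ * ‖v x - u' (x - y)‖ ^ ((1:ℝ)+γ) := by
        have h := aux_taylor hγ hG hHolder (u' (x - y)) (v x)
        rw [hD_def]
        have hneg : G (v x) - G (u' (x - y)) - fderiv ℝ G (v x) (v x - u' (x - y))
            = -(G (u' (x - y)) - G (v x) - fderiv ℝ G (v x) (u' (x - y) - v x)) := by
          rw [map_sub, map_sub]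
          ring
        rw [hneg, norm_neg]
        refine le_trans h (le_of_eq ?_)
        rw [norm_sub_rev]
      calc (‖k y‖₊ : ℝ≥0∞) * (‖G (v x) - G (u' (x - y)) - D (v x - u' (x - y))‖₊ : ℝ≥0∞)
          ≤ (‖k y‖₊ : ℝ≥0∞) * ENNReal.ofReal (C₀ * ‖v x - u' (x - y)‖ ^ ((1:ℝ)+γ)) := by
            gcongr
            rw [← enorm_eq_nnnorm, ← ofReal_norm]
            exact ENNReal.ofReal_le_ofReal htay
        _ = ENNReal.ofReal C₀ * (kk y * (‖v x - u' (x - y)‖₊ : ℝ≥0∞) ^ ((1:ℝ)+γ)) := by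
            simp only [hkk_def]
            rw [ENNReal.ofReal_mul hC₀, ← ENNReal.ofReal_rpow_of_nonneg (norm_nonneg _) h1γ0.le,
              ofReal_norm, enorm_eq_nnnorm, ← enorm_eq_nnnorm (k y), Real.enorm_eq_ofReal (hknn y)]
            ring
    -- A := ‖v x - u' x‖ₑ bound
    have hA0 : (‖v x - u' x‖₊ : ℝ≥0∞) ≤ ∫⁻ z, kk z * B x z ∂volume := by
      have hvsub : v x - u' x = ∫ y, k y • (u' (x - y) - u' x) ∂volume := by
        have heq : (fun y => k y • (u' (x - y) - u' x))
            = fun y => k y • u' (x - y) - k y • u' x := by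
          funext y
          rw [smul_sub]
        rw [heq, integral_sub (hmain_smul x) (hkint.smul_const _), integral_smul_const, hk1,
          one_smul, hv_def]
      rw [hvsub]
      refine le_trans (enorm_integral_le_lintegral_enorm _) (lintegral_mono fun z => ?_)
      simp only [hkk_def, hB_def]
      have hrev : ‖u' (x - z) - u' x‖₊ = ‖u' x - u' (x - z)‖₊ := by
        rw [← neg_sub, nnnorm_neg]
      rw [enorm_smul, Real.enorm_eq_ofReal (hknn z), enorm_eq_nnnorm, hrev]
    have hA : (‖v x - u' x‖₊ : ℝ≥0∞) ≤ S x ^ (1/p) :=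
      le_trans hA0 (aux_jensen hkkm.aemeasurable (hBm x).aemeasurable hkken hkk1 hp1)
    have hAp : ((‖v x - u' x‖₊ : ℝ≥0∞)) ^ ((1:ℝ)+γ) ≤ S x ^ (1/q) := by
      rw [← hpow_eq (S x)]
      exact ENNReal.rpow_le_rpow hA h1γ0.le
    -- second Jensen
    have hU : ∫⁻ y, kk y * B x y ^ ((1:ℝ)+γ) ∂volume ≤ S x ^ (1/q) := by
      have h := aux_jensen hkkm.aemeasurable ((hBm x).pow_const ((1:ℝ)+γ)).aemeasurable
        hkken hkk1 hq
      refine le_trans h (le_of_eq ?_)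
      congr 1
      refine lintegral_congr fun y => ?_
      rw [← ENNReal.rpow_mul]
      congr 2
      rw [hp_def]
      ring
    -- triangle + power
    have hT : ∫⁻ y, kk y * (‖v x - u' (x - y)‖₊ : ℝ≥0∞) ^ ((1:ℝ)+γ) ∂volume
        ≤ 2 ^ ((2:ℝ)+γ) * S x ^ (1/q) := by
      have htri : ∀ y, (‖v x - u' (x - y)‖₊ : ℝ≥0∞)
          ≤ (‖v x - u' x‖₊ : ℝ≥0∞) + B x y := by
        intro y
        rw [hB_def]
        simp only []
        rw [show v x - u' (x - y) = (v x - u' x) + (u' x - u' (x - y)) by ring]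
        rw [← ENNReal.coe_add]
        exact_mod_cast nnnorm_add_le _ _
      calc ∫⁻ y, kk y * (‖v x - u' (x - y)‖₊ : ℝ≥0∞) ^ ((1:ℝ)+γ) ∂volume
          ≤ ∫⁻ y, kk y * (2 ^ ((1:ℝ)+γ) * ((‖v x - u' x‖₊ : ℝ≥0∞) ^ ((1:ℝ)+γ)
              + B x y ^ ((1:ℝ)+γ))) ∂volume := by
            refine lintegral_mono fun y => mul_le_mul_right ?_ _
            exact le_trans (ENNReal.rpow_le_rpow (htri y) h1γ0.le)
              (aux_two_rpow _ _ h1γ0.le)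
        _ = 2 ^ ((1:ℝ)+γ) * (∫⁻ y, (kk y * (‖v x - u' x‖₊ : ℝ≥0∞) ^ ((1:ℝ)+γ)
              + kk y * B x y ^ ((1:ℝ)+γ)) ∂volume) := by
            rw [← lintegral_const_mul' _ _ h2ne]
            refine lintegral_congr fun y => ?_
            ring
        _ = 2 ^ ((1:ℝ)+γ) * ((‖v x - u' x‖₊ : ℝ≥0∞) ^ ((1:ℝ)+γ)
              + ∫⁻ y, kk y * B x y ^ ((1:ℝ)+γ) ∂volume) := by
            congr 1
            rw [lintegral_add_left (hkkm.mul_const _)]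
            congr 1
            rw [lintegral_mul_const' _ _ (ENNReal.rpow_lt_top_of_nonneg h1γ0.le
              ENNReal.coe_ne_top).ne, hkk1, one_mul]
        _ ≤ 2 ^ ((1:ℝ)+γ) * (S x ^ (1/q) + S x ^ (1/q)) := by
            gcongr
        _ = 2 ^ ((2:ℝ)+γ) * S x ^ (1/q) := by
            have h22 : (2:ℝ≥0∞) ^ ((2:ℝ)+γ) = 2 ^ ((1:ℝ)+γ) * 2 := by
              rw [show ((2:ℝ)+γ) = (1+γ) + 1 by ring,
                ENNReal.rpow_add _ _ (by norm_num) (by norm_num), ENNReal.rpow_one]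
            rw [← two_mul, h22, mul_assoc]
    have hfinal : (‖F x‖₊ : ℝ≥0∞) ≤ (ENNReal.ofReal C₀ * 2 ^ ((2:ℝ)+γ)) * S x ^ (1/q) := by
      refine le_trans hF1 ?_
      rw [mul_assoc]
      exact mul_le_mul_right hT _
    calc (‖F x‖₊ : ℝ≥0∞) ^ q ≤ ((ENNReal.ofReal C₀ * 2 ^ ((2:ℝ)+γ)) * S x ^ (1/q)) ^ q :=
          ENNReal.rpow_le_rpow hfinal hq0.le
      _ = K * S x := by
          rw [ENNReal.mul_rpow_of_nonneg _ _ hq0.le, ← ENNReal.rpow_mul,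
            one_div_mul_cancel hq0.ne', ENNReal.rpow_one, hK_def]
  -- volumes and ae-equality of balls
  have hvolBx : ∀ x : Fin m → ℝ, volume (Metric.ball x ε) = ENNReal.ofReal (2*ε) ^ m := by
    intro x
    rw [volume_pi_ball x hε]
    simp [Real.volume_ball]
  have hballs : ∀ x : Fin m → ℝ, Metric.closedBall x ε =ᵐ[volume] Metric.ball x ε := by
    intro x
    rw [ae_eq_set]
    constructor
    · rw [Metric.closedBall_diff_ball]
      exact Measure.addHaar_sphere_of_ne_zero volume x hε.ne'
    · rw [Set.diff_eq_empty.2 Metric.ball_subset_closedBall]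
      exact measure_empty
  have hset : MeasurableSet {pr : (Fin m → ℝ) × (Fin m → ℝ) | dist pr.2 pr.1 < ε} :=
    measurableSet_lt (measurable_dist.comp (measurable_snd.prodMk measurable_fst))
      measurable_const
  have h2pne : ((2:ℝ≥0∞) ^ p) ≠ ∞ := (ENNReal.rpow_lt_top_of_nonneg hp0.le (by norm_num)).ne
  -- the local Besov quantity
  set L : (Fin m → ℝ) → ℝ≥0∞ :=
    fun x => ∫⁻ z in Metric.ball x ε, (‖u' x - u' z‖₊ : ℝ≥0∞) ^ p ∂volume with hL_def
  have hindm : ∀ (c : (Fin m → ℝ) × (Fin m → ℝ) → ℝ≥0∞), Measurable c →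
      Measurable (fun pr : (Fin m → ℝ) × (Fin m → ℝ) =>
        (Metric.ball pr.1 ε).indicator (fun z => c (pr.1, z)) pr.2) := by
    intro c hc
    have heq : (fun pr : (Fin m → ℝ) × (Fin m → ℝ) =>
        (Metric.ball pr.1 ε).indicator (fun z => c (pr.1, z)) pr.2)
        = {pr : (Fin m → ℝ) × (Fin m → ℝ) | dist pr.2 pr.1 < ε}.indicator c := by
      funext pr
      by_cases hd : dist pr.2 pr.1 < ε
      · rw [Set.indicator_of_mem (Metric.mem_ball.2 hd),
          Set.indicator_of_mem (show pr ∈ {pr : (Fin m → ℝ) × (Fin m → ℝ) |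
            dist pr.2 pr.1 < ε} from hd)]
      · rw [Set.indicator_of_notMem (fun hc' => hd (Metric.mem_ball.1 hc')),
          Set.indicator_of_notMem (show pr ∉ {pr : (Fin m → ℝ) × (Fin m → ℝ) |
            dist pr.2 pr.1 < ε} from hd)]
    rw [heq]
    exact hc.indicator hset
  have hLm : Measurable L := by
    have h1 : L = fun x => ∫⁻ z, (Metric.ball x ε).indicator
        (fun z => (‖u' x - u' z‖₊ : ℝ≥0∞) ^ p) z ∂volume := by
      funext x
      rw [hL_def]
      exact (lintegral_indicator measurableSet_ball _).symm
    rw [h1]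
    exact Measurable.lintegral_prod_right
      (hindm (fun pr => (‖u' pr.1 - u' pr.2‖₊ : ℝ≥0∞) ^ p)
        (((hu'm.comp measurable_fst).sub (hu'm.comp measurable_snd)).enorm.pow_const p))
  have hsplit : ∀ x z : Fin m → ℝ, (‖u' x - u' z‖₊ : ℝ≥0∞) ^ p
      ≤ 2 ^ p * ((‖u' x‖₊ : ℝ≥0∞) ^ p + (‖u' z‖₊ : ℝ≥0∞) ^ p) := by
    intro x z
    refine le_trans (ENNReal.rpow_le_rpow ?_ hp0.le) (aux_two_rpow _ _ hp0.le)
    rw [← ENNReal.coe_add]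
    exact_mod_cast nnnorm_sub_le _ _
  have hswap : ∫⁻ x, (∫⁻ z in Metric.ball x ε, (‖u' z‖₊ : ℝ≥0∞) ^ p ∂volume) ∂volume
      = ENNReal.ofReal (2*ε) ^ m * ∫⁻ z, (‖u' z‖₊ : ℝ≥0∞) ^ p ∂volume := by
    have hind : ∀ x : Fin m → ℝ, ∫⁻ z in Metric.ball x ε, (‖u' z‖₊ : ℝ≥0∞) ^ p ∂volume
        = ∫⁻ z, (Metric.ball x ε).indicator (fun z => (‖u' z‖₊ : ℝ≥0∞) ^ p) z ∂volume :=
      fun x => (lintegral_indicator measurableSet_ball _).symm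
    simp_rw [hind]
    rw [lintegral_lintegral_swap (hindm (fun pr => (‖u' pr.2‖₊ : ℝ≥0∞) ^ p)
      ((hu'm.comp measurable_snd).enorm.pow_const p)).aemeasurable]
    have hxz : ∀ z x : Fin m → ℝ, (Metric.ball x ε).indicator
        (fun z => (‖u' z‖₊ : ℝ≥0∞) ^ p) z
        = (Metric.ball z ε).indicator (fun _ => (‖u' z‖₊ : ℝ≥0∞) ^ p) x := by
      intro z x
      rcases lt_or_ge (dist z x) ε with hd | hd
      · rw [Set.indicator_of_mem (Metric.mem_ball.2 hd),
          Set.indicator_of_mem (Metric.mem_ball.2 (by rwa [dist_comm]))]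
      · rw [Set.indicator_of_notMem
            (fun hc => absurd (Metric.mem_ball.1 hc) (not_lt.2 hd)),
          Set.indicator_of_notMem
            (fun hc => absurd (Metric.mem_ball.1 hc) (not_lt.2 (by rwa [dist_comm])))]
    have hin : ∀ z : Fin m → ℝ, ∫⁻ x, (Metric.ball x ε).indicator
        (fun z' => (‖u' z'‖₊ : ℝ≥0∞) ^ p) z ∂volume
        = (‖u' z‖₊ : ℝ≥0∞) ^ p * ENNReal.ofReal (2*ε) ^ m := by
      intro z
      rw [show (fun x => (Metric.ball x ε).indicator (fun z' => (‖u' z'‖₊ : ℝ≥0∞) ^ p) z)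
          = fun x => (Metric.ball z ε).indicator (fun _ => (‖u' z‖₊ : ℝ≥0∞) ^ p) x
          from funext fun x => hxz z x]
      rw [lintegral_indicator measurableSet_ball, setLIntegral_const, hvolBx z]
    rw [lintegral_congr hin,
      lintegral_mul_const' _ _ (ENNReal.pow_ne_top ENNReal.ofReal_ne_top), mul_comm]
  have hLfin : ∫⁻ x, L x ∂volume < ∞ := by
    have hLb : ∀ x, L x ≤ 2 ^ p * (ENNReal.ofReal (2*ε) ^ m * (‖u' x‖₊ : ℝ≥0∞) ^ p
        + ∫⁻ z in Metric.ball x ε, (‖u' z‖₊ : ℝ≥0∞) ^ p ∂volume) := by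
      intro x
      rw [hL_def]
      simp only []
      calc ∫⁻ z in Metric.ball x ε, (‖u' x - u' z‖₊ : ℝ≥0∞) ^ p ∂volume
          ≤ ∫⁻ z in Metric.ball x ε,
              2 ^ p * ((‖u' x‖₊ : ℝ≥0∞) ^ p + (‖u' z‖₊ : ℝ≥0∞) ^ p) ∂volume :=
            lintegral_mono fun z => hsplit x z
        _ = 2 ^ p * ∫⁻ z in Metric.ball x ε,
              ((‖u' x‖₊ : ℝ≥0∞) ^ p + (‖u' z‖₊ : ℝ≥0∞) ^ p) ∂volume :=
            lintegral_const_mul' _ _ h2pne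
        _ = 2 ^ p * (ENNReal.ofReal (2*ε) ^ m * (‖u' x‖₊ : ℝ≥0∞) ^ p
              + ∫⁻ z in Metric.ball x ε, (‖u' z‖₊ : ℝ≥0∞) ^ p ∂volume) := by
            rw [lintegral_add_left measurable_const, setLIntegral_const, hvolBx x, mul_comm
              ((‖u' x‖₊ : ℝ≥0∞) ^ p)]
    calc ∫⁻ x, L x ∂volume
        ≤ ∫⁻ x, 2 ^ p * (ENNReal.ofReal (2*ε) ^ m * (‖u' x‖₊ : ℝ≥0∞) ^ p
            + ∫⁻ z in Metric.ball x ε, (‖u' z‖₊ : ℝ≥0∞) ^ p ∂volume) ∂volume :=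
          lintegral_mono hLb
      _ = 2 ^ p * (ENNReal.ofReal (2*ε) ^ m * ∫⁻ x, (‖u' x‖₊ : ℝ≥0∞) ^ p ∂volume
            + ∫⁻ x, (∫⁻ z in Metric.ball x ε, (‖u' z‖₊ : ℝ≥0∞) ^ p ∂volume) ∂volume) := by
          rw [lintegral_const_mul' _ _ h2pne]
          congr 1
          rw [lintegral_add_left (show Measurable fun x : Fin m → ℝ =>
              ENNReal.ofReal (2*ε) ^ m * (‖u' x‖₊ : ℝ≥0∞) ^ p from
              measurable_const.mul (hu'm.enorm.pow_const p)),
            lintegral_const_mul' _ _ (ENNReal.pow_ne_top ENNReal.ofReal_ne_top)]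
      _ < ∞ := by
          rw [hswap]
          refine ENNReal.mul_lt_top (by simp [h2pne, lt_top_iff_ne_top]) ?_
          refine ENNReal.add_lt_top.2 ⟨?_, ?_⟩ <;>
            exact ENNReal.mul_lt_top
              (lt_top_iff_ne_top.2 (ENNReal.pow_ne_top ENNReal.ofReal_ne_top)) hIp
  -- conversion of the VMO hypothesis
  have hL_toReal : ∀ x : Fin m → ℝ,
      ∫ z in Metric.ball x ε, ‖u' x - u' z‖ ^ p ∂volume = (L x).toReal := by
    intro x
    rw [integral_eq_lintegral_of_nonneg_ae
      (ae_of_all _ fun z => Real.rpow_nonneg (norm_nonneg _) p)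
      ((show Measurable fun z : Fin m → ℝ => ‖u' x - u' z‖ ^ p from
        (measurable_const.sub hu'm).norm.pow_const p).aestronglyMeasurable)]
    rw [hL_def]
    congr 1
    refine lintegral_congr fun z => ?_
    rw [← ENNReal.ofReal_rpow_of_nonneg (norm_nonneg _) hp0.le, ofReal_norm, enorm_eq_nnnorm]
  have havg : ∀ᵐ x ∂(volume : Measure (Fin m → ℝ)),
      (⨍ y in Metric.ball x ε, ‖u x - u y‖ ^ p ∂volume) = ((2*ε)^m)⁻¹ * (L x).toReal := by
    filter_upwards [huu'] with x hx
    rw [setAverage_eq, smul_eq_mul]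
    have h2 : ∫ y in Metric.ball x ε, ‖u x - u y‖ ^ p ∂volume
        = ∫ y in Metric.ball x ε, ‖u' x - u' y‖ ^ p ∂volume :=
      integral_congr_ae (ae_restrict_of_ae (huu'.mono fun y hy => by simp only [hx, hy]))
    rw [h2, hL_toReal x, measureReal_def, hvolBx x, ENNReal.toReal_pow, ENNReal.toReal_ofReal (by positivity)]
  have hInt : ∫ x, (⨍ y in Metric.ball x ε, ‖u x - u y‖ ^ p ∂volume) ∂volume
      = ((2*ε)^m)⁻¹ * (∫⁻ x, L x ∂volume).toReal := by
    rw [integral_congr_ae havg, integral_const_mul]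
    congr 1
    exact integral_toReal hLm.aemeasurable (ae_lt_top hLm hLfin.ne)
  have hVMO' : (∫⁻ x, L x ∂volume).toReal ≤ ε * ((2*ε)^m * ω ε) := by
    have h0 := hVMO ε hε hεε₀
    rw [hInt] at h0
    have hc : (0:ℝ) < (2*ε)^m := by positivity
    have h1 := mul_le_mul_of_nonneg_left h0 (le_of_lt (mul_pos hε hc))
    have h2 : ε * (2*ε)^m * (1 / ε * (((2*ε)^m)⁻¹ * (∫⁻ x, L x ∂volume).toReal))
        = (∫⁻ x, L x ∂volume).toReal := by
      field_simp
    rw [h2] at h1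
    calc (∫⁻ x, L x ∂volume).toReal ≤ ε * (2*ε)^m * ω ε := h1
      _ = ε * ((2*ε)^m * ω ε) := by ring
  have hLle : ∫⁻ x, L x ∂volume ≤ ENNReal.ofReal (ε * ((2*ε)^m * ω ε)) := by
    rw [← ENNReal.ofReal_toReal hLfin.ne]
    exact ENNReal.ofReal_le_ofReal hVMO'
  -- main chain
  have hm3 : Measurable (fun pr : (Fin m → ℝ) × (Fin m → ℝ) => kk pr.2 * B pr.1 pr.2 ^ p) := by
    refine Measurable.mul (hkkm.comp measurable_snd) (Measurable.pow_const ?_ p)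
    simp only [hB_def]
    exact ((hu'm.comp measurable_fst).sub
      (hu'm.comp (measurable_fst.sub measurable_snd))).enorm
  have hm4 : Measurable (fun pr : (Fin m → ℝ) × (Fin m → ℝ) => B pr.2 pr.1 ^ p) := by
    refine Measurable.pow_const ?_ p
    simp only [hB_def]
    exact ((hu'm.comp measurable_snd).sub
      (hu'm.comp (measurable_snd.sub measurable_fst))).enorm
  have hmain : ∫⁻ x, (‖F x‖₊ : ℝ≥0∞) ^ q ∂volume ≤ ENNReal.ofReal (c₁ * (ε * ω ε)) := by
    calc ∫⁻ x, (‖F x‖₊ : ℝ≥0∞) ^ q ∂volume ≤ ∫⁻ x, K * S x ∂volume :=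
          lintegral_mono fun x => hpoint x
      _ = K * ∫⁻ x, S x ∂volume := lintegral_const_mul' _ _ hK_ne_top
      _ = K * ∫⁻ y, kk y * (∫⁻ x, B x y ^ p ∂volume) ∂volume := by
          congr 1
          simp only [hS_def]
          rw [lintegral_lintegral_swap hm3.aemeasurable]
          exact lintegral_congr fun y => lintegral_const_mul' _ _ (hkken y)
      _ ≤ K * (ENNReal.ofReal ((ε^m)⁻¹ * Mη)
            * ∫⁻ y in Metric.closedBall 0 ε, (∫⁻ x, B x y ^ p ∂volume) ∂volume) :=
          mul_le_mul_right (hcut fun y => ∫⁻ x, B x y ^ p ∂volume) K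
      _ = K * (ENNReal.ofReal ((ε^m)⁻¹ * Mη)
            * ∫⁻ x, (∫⁻ y in Metric.closedBall 0 ε, B x y ^ p ∂volume) ∂volume) := by
          congr 2
          exact lintegral_lintegral_swap hm4.aemeasurable
      _ = K * (ENNReal.ofReal ((ε^m)⁻¹ * Mη) * ∫⁻ x, L x ∂volume) := by
          congr 2
          refine lintegral_congr fun x => ?_
          simp only [hB_def, hL_def]
          rw [aux_translate_ball (fun z => (‖u' x - u' z‖₊ : ℝ≥0∞) ^ p) x ε]
          exact setLIntegral_congr (hballs x)
      _ ≤ K * (ENNReal.ofReal ((ε^m)⁻¹ * Mη) * ENNReal.ofReal (ε * ((2*ε)^m * ω ε))) := by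
          gcongr
      _ ≤ ENNReal.ofReal (c₁ * (ε * ω ε)) := by
          rw [← ENNReal.ofReal_toReal hK_ne_top, ← ENNReal.ofReal_mul (by positivity),
            ← ENNReal.ofReal_mul ENNReal.toReal_nonneg]
          refine ENNReal.ofReal_le_ofReal (le_of_eq ?_)
          rw [hc₁_def]
          rw [mul_pow (2:ℝ) ε m]
          field_simp
  -- final conversion
  have hq_ne : ENNReal.ofReal q ≠ 0 := by
    simp only [ne_eq, ENNReal.ofReal_eq_zero, not_le]
    exact hq0
  rw [eLpNorm_eq_lintegral_rpow_enorm_toReal hq_ne ENNReal.ofReal_ne_top,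
    ENNReal.toReal_ofReal hq0.le]
  simp only [enorm_eq_nnnorm]
  have hXfin : ∫⁻ x, (‖F x‖₊ : ℝ≥0∞) ^ q ∂volume ≠ ∞ :=
    (lt_of_le_of_lt hmain ENNReal.ofReal_lt_top).ne
  have h1 : (((∫⁻ x, (‖F x‖₊ : ℝ≥0∞) ^ q ∂volume) ^ (1/q)).toReal) ^ q
      = (∫⁻ x, (‖F x‖₊ : ℝ≥0∞) ^ q ∂volume).toReal := by
    rw [ENNReal.toReal_rpow, ← ENNReal.rpow_mul, one_div_mul_cancel hq0.ne', ENNReal.rpow_one]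
  rw [h1]
  have h2 : (∫⁻ x, (‖F x‖₊ : ℝ≥0∞) ^ q ∂volume).toReal ≤ c₁ * (ε * ω ε) :=
    ENNReal.toReal_le_of_le_ofReal (mul_nonneg hc₁ (mul_nonneg hε.le (hωnn ε))) hmain
  have h3 : (0:ℝ) ≤ ε * ω ε := mul_nonneg hε.le (hωnn ε)
  nlinarith
end

section
/- Let p ∈ [1,∞), s > 1/p, and let Ω ⊆ ℝ^m be a bounded open set. If u ∈ L^p(Ω) satisfies the Besov condition ‖u(·+h) - u(·)‖_{L^p} ≤ M|h|^s (translations interpreted with an extension of u by a fixed value, or on the torus), then u satisfies the Besov-VMO condition: (1/ε) ∫_{Ω'} ⨍_{B_ε(x)} |u(x) - u(y)|^p dy dx ≤ C M^p ε^{ps - 1} for every compactly contained Ω' ⊂⊂ Ω and all ε < dist(Ω', ∂Ω); in particular the left-hand side tends to 0 as ε → 0 since ps > 1. -/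
/-!
Averaging over `y ∈ B_ε(x)` is averaging over translations `h ∈ B_ε(0)`, so by Tonelli the
left-hand side is at most `ε⁻¹` times the average over `|h| < ε` of `‖u(· + h) - u‖_p^p`,
which the Besov bound controls by `(M ε^s)^p`.
-/

open MeasureTheory Metric
open scoped ENNReal

section Lebesgue

variable {α : Type*} [MeasurableSpace α] {μ : Measure α}

theorem ofReal_integral_le_lintegral_ofReal (f : α → ℝ) :
    ENNReal.ofReal (∫ x, f x ∂μ) ≤ ∫⁻ x, ENNReal.ofReal (f x) ∂μ := by
  by_cases hf : Integrable f μ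
  · rw [integral_eq_lintegral_pos_part_sub_lintegral_neg_part hf]
    exact (ENNReal.ofReal_le_ofReal (sub_le_self _ ENNReal.toReal_nonneg)).trans
      ENNReal.ofReal_toReal_le
  · simp [integral_undef hf]

theorem ofReal_average_le_laverage_ofReal (f : α → ℝ) :
    ENNReal.ofReal (⨍ x, f x ∂μ) ≤ ⨍⁻ x, ENNReal.ofReal (f x) ∂μ :=
  ofReal_integral_le_lintegral_ofReal f

theorem lintegral_ofReal_abs_rpow_eq_eLpNorm_rpow (f : α → ℝ) {p : ℝ} (hp : 0 < p) :
    ∫⁻ x, ENNReal.ofReal (|f x| ^ p) ∂μ = eLpNorm f (ENNReal.ofReal p) μ ^ p := by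
  rw [eLpNorm_eq_eLpNorm' (by simpa using hp) ENNReal.ofReal_ne_top,
    ENNReal.toReal_ofReal hp.le, ← lintegral_rpow_enorm_eq_rpow_eLpNorm' hp]
  simp_rw [Real.enorm_eq_ofReal_abs, ENNReal.ofReal_rpow_of_nonneg (abs_nonneg _) hp.le]

theorem lintegral_setLAverage_le {β : Type*} [MeasurableSpace β] {ν : Measure β} [SFinite μ]
    [SFinite ν] {F : α → β → ℝ≥0∞} {t : Set β} {K : ℝ≥0∞}
    (hF : AEMeasurable (Function.uncurry F) (μ.prod (ν.restrict t)))
    (hK : ∀ y ∈ t, ∫⁻ x, F x y ∂μ ≤ K) (ht : MeasurableSet t) :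
    ∫⁻ x, ⨍⁻ y in t, F x y ∂ν ∂μ ≤ K := by
  set ν' := (ν t)⁻¹ • ν.restrict t
  have hν' : ν' ≪ ν.restrict t := Measure.AbsolutelyContinuous.rfl.smul_left _
  calc ∫⁻ x, ⨍⁻ y in t, F x y ∂ν ∂μ = ∫⁻ y, ∫⁻ x, F x y ∂μ ∂ν' := by
        simp_rw [setLAverage_eq']
        exact lintegral_lintegral_swap (hF.mono_ac (Measure.AbsolutelyContinuous.rfl.prod hν'))
    _ ≤ ∫⁻ _, K ∂ν' :=
        lintegral_mono_ae (Filter.Eventually.mono (hν'.ae_le (ae_restrict_mem ht)) hK)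
    _ ≤ K := by
        -- `(ν t)⁻¹ * ν t ≤ 1` holds in `ℝ≥0∞` even when `ν t` is `0` or `∞`
        simpa [ν', mul_comm K, ← mul_assoc] using
          mul_le_of_le_one_left' (ENNReal.inv_mul_le_one (ν t))

end Lebesgue

section Translation

variable {E : Type*} [NormedAddCommGroup E] [MeasurableSpace E] [BorelSpace E]
  {μ : Measure E} [μ.IsAddLeftInvariant]

theorem setLAverage_ball_eq_setLAverage_ball_zero (G : E → ℝ≥0∞) (x : E) (r : ℝ) :
    ⨍⁻ y in ball x r, G y ∂μ = ⨍⁻ h in ball 0 r, G (x + h) ∂μ := by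
  have hball : (x + ·) ⁻¹' ball x r = ball (0 : E) r := by simp [preimage_add_ball]
  rw [setLAverage_eq, setLAverage_eq, ← hball, measure_preimage_add,
    (measurePreserving_add_left μ x).setLIntegral_comp_preimage_emb
      (measurableEmbedding_addLeft x)]

theorem lintegral_ofReal_average_ball_le [SecondCountableTopology E] [SFinite μ] {u : E → ℝ}
    (hu : AEMeasurable u μ) (p r : ℝ) {K : ℝ≥0∞} (s : Set E)
    (hK : ∀ h ∈ ball (0 : E) r, ∫⁻ x, ENNReal.ofReal (|u (x + h) - u x| ^ p) ∂μ ≤ K) :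
    ∫⁻ x in s, ENNReal.ofReal (⨍ y in ball x r, |u x - u y| ^ p ∂μ) ∂μ ≤ K := by
  have hF : AEMeasurable (fun z : E × E => ENNReal.ofReal (|u (z.1 + z.2) - u z.1| ^ p))
      (μ.prod μ) :=
    have hu_add : AEMeasurable (fun z : E × E => u (z.1 + z.2)) (μ.prod μ) :=
      hu.comp_quasiMeasurePreserving (quasiMeasurePreserving_add μ μ)
    ((hu_add.sub hu.comp_fst).abs.pow_const p).ennreal_ofReal
  calc ∫⁻ x in s, ENNReal.ofReal (⨍ y in ball x r, |u x - u y| ^ p ∂μ) ∂μ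
      ≤ ∫⁻ x in s, ⨍⁻ h in ball 0 r, ENNReal.ofReal (|u (x + h) - u x| ^ p) ∂μ ∂μ := by
        refine lintegral_mono fun x => (ofReal_average_le_laverage_ofReal _).trans_eq ?_
        simp_rw [setLAverage_ball_eq_setLAverage_ball_zero _ x, abs_sub_comm (u x)]
    _ ≤ K := by
        refine lintegral_setLAverage_le ?_
          (fun h hh => (setLIntegral_le_lintegral _ _).trans (hK h hh)) measurableSet_ball
        rw [Measure.prod_restrict]
        exact hF.restrict

end Translation

theorem stmt_8_general {m : ℕ} (p s M : ℝ) (hp : 1 ≤ p) (hps : 1 / p < s) (hM : 0 ≤ M)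
    (Ω : Set (Fin m → ℝ))
    (u : (Fin m → ℝ) → ℝ) (hu : MemLp u (ENNReal.ofReal p) volume)
    (hBesov : ∀ h : Fin m → ℝ,
      eLpNorm (fun x => u (x + h) - u x) (ENNReal.ofReal p) volume
        ≤ ENNReal.ofReal (M * ‖h‖ ^ s)) :
    ∃ C > 0, ∀ Ω' : Set (Fin m → ℝ), Ω' ⊆ Ω → MeasurableSet Ω' →
      ∀ ε : ℝ, 0 < ε → (∀ x ∈ Ω', Metric.ball x ε ⊆ Ω) →
        (1 / ε) * ∫ x in Ω', ⨍ y in Metric.ball x ε, |u x - u y| ^ p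
          ≤ C * M ^ p * ε ^ (p * s - 1) := by
  have hp0 : 0 < p := by linarith
  have hs0 : 0 < s := (one_div_pos.2 hp0).trans hps
  refine ⟨1, one_pos, fun Ω' _ _ ε hε _ => ?_⟩
  have hK : ∀ h ∈ ball (0 : Fin m → ℝ) ε,
      ∫⁻ x, ENNReal.ofReal (|u (x + h) - u x| ^ p) ≤ ENNReal.ofReal ((M * ε ^ s) ^ p) := by
    intro h hh
    have hnorm : ‖h‖ ≤ ε := (mem_ball_zero_iff.1 hh).le
    rw [lintegral_ofReal_abs_rpow_eq_eLpNorm_rpow _ hp0,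
      ← ENNReal.ofReal_rpow_of_nonneg (by positivity) hp0.le]
    gcongr
    exact (hBesov h).trans (by gcongr)
  have hint : ∫ x in Ω', ⨍ y in ball x ε, |u x - u y| ^ p ≤ (M * ε ^ s) ^ p := by
    rw [← ENNReal.ofReal_le_ofReal_iff (by positivity)]
    exact (ofReal_integral_le_lintegral_ofReal _).trans
      (lintegral_ofReal_average_ball_le hu.aemeasurable p ε Ω' hK)
  calc (1 / ε) * ∫ x in Ω', ⨍ y in ball x ε, |u x - u y| ^ p
      ≤ (1 / ε) * (M * ε ^ s) ^ p := by gcongr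
    _ = 1 * M ^ p * ε ^ (p * s - 1) := by
        rw [Real.mul_rpow hM (by positivity), ← Real.rpow_mul hε.le, Real.rpow_sub hε,
          Real.rpow_one, mul_comm s p]
        ring

/-- The inclusion `B^s_{p,∞} ⊆ B^{1/p}_{p,VMO}` for `s > 1/p`: a Besov translation bound
implies the Besov-VMO bound with modulus `C M^p ε^{ps-1}` on compactly contained subsets. -/
theorem stmt_8 {m : ℕ} (p s M : ℝ) (hp : 1 ≤ p) (hps : 1 / p < s) (hs1 : s < 1) (hM : 0 ≤ M)
    (Ω : Set (Fin m → ℝ)) (hΩ : IsOpen Ω) (hΩb : Bornology.IsBounded Ω)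
    (u : (Fin m → ℝ) → ℝ) (hu : MemLp u (ENNReal.ofReal p) volume)
    (hBesov : ∀ h : Fin m → ℝ,
      eLpNorm (fun x => u (x + h) - u x) (ENNReal.ofReal p) volume
        ≤ ENNReal.ofReal (M * ‖h‖ ^ s)) :
    ∃ C > 0, ∀ Ω' : Set (Fin m → ℝ), Ω' ⊆ Ω → MeasurableSet Ω' →
      ∀ ε : ℝ, 0 < ε → (∀ x ∈ Ω', Metric.ball x ε ⊆ Ω) →
        (1 / ε) * ∫ x in Ω', ⨍ y in Metric.ball x ε, |u x - u y| ^ p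
          ≤ C * M ^ p * ε ^ (p * s - 1) :=
  stmt_8_general p s M hp hps hM Ω u hu hBesov
end
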